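/- Let X have symmetric density f(x) = |x|^{-3} 1{|x| ≥ 1}, and let φ₂(x) = 2 Lx (1 + LLx·sin²(LLLx)) where L denotes iterated logarithm truncated at e. Then E[X²/(φ₂(|X|)·LL|X|)] < ∞. -/

import Mathlib

open MeasureTheory ProbabilityTheory Filter Set
open scoped ProbabilityTheory ENNReal

/-!
After pushing forward to the density, the expectation is `2 ∫₁^∞ dx / (x φ₂(x) LL x)`. Past a
bounded piece, the substitution `x = exp (exp (exp t))` turns this into
`∫₁^∞ dt / (2 (1 + eᵗ sin² t))`. On `[kπ - π/2, kπ + π/2]` Jordan's inequality gives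
`sin² t ≥ (2 (t - kπ) / π)²`, so the integrand is dominated by a Cauchy kernel of width
`≍ e^{-kπ/2}`, and the pieces form a convergent geometric series.
-/

open Real ENNReal

lemma lintegral_inv_one_add_sq : ∫⁻ y, ENNReal.ofReal (1 + y ^ 2)⁻¹ = ENNReal.ofReal π := by
  rw [← ofReal_integral_eq_lintegral_ofReal integrable_inv_one_add_sq
    (ae_of_all _ fun _ => by positivity), integral_univ_inv_one_add_sq]

lemma lintegral_inv_one_add_sq_mul_sub {c : ℝ} (hc : 0 < c) (a : ℝ) :
    ∫⁻ t, ENNReal.ofReal (1 + (c * (t - a)) ^ 2)⁻¹ = ENNReal.ofReal (π / c) := by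
  have himage : (fun y => y / c + a) '' univ = univ :=
    image_univ_of_surjective fun t => ⟨c * (t - a), by field_simp; ring⟩
  have hderiv : ∀ y ∈ univ, HasDerivWithinAt (fun y => y / c + a) (1 / c) univ y := fun y _ =>
    (((hasDerivAt_id' y).div_const c).add_const a).hasDerivWithinAt
  have hinj : InjOn (fun y => y / c + a) univ := fun y _ z _ h => by
    simpa [hc.ne'] using h
  have := lintegral_image_eq_lintegral_abs_deriv_mul MeasurableSet.univ hderiv hinj
    fun t => ENNReal.ofReal (1 + (c * (t - a)) ^ 2)⁻¹
  rw [himage, Measure.restrict_univ] at this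
  rw [this]
  have hcancel : ∀ y, c * (y / c + a - a) = y := fun y => by field_simp; ring
  simp only [hcancel]
  rw [lintegral_const_mul _ (by fun_prop), lintegral_inv_one_add_sq,
    ← ofReal_mul (by positivity), abs_of_pos (one_div_pos.2 hc), one_div_mul_eq_div]

lemma inv_one_add_sq_mul_sin_sq_le (a : ℝ) {t : ℝ} (k : ℕ) (ht : |t - k * π| ≤ π / 2) :
    (1 + a ^ 2 * sin t ^ 2)⁻¹ ≤ (1 + (2 * a / π * (t - k * π)) ^ 2)⁻¹ := by
  have hsin : sin (t - k * π) ^ 2 = sin t ^ 2 := by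
    rw [sin_sub_nat_mul_pi, mul_pow, ← pow_mul, pow_mul', neg_one_sq, one_pow, one_mul]
  have hjordan : (2 / π * |t - k * π|) ^ 2 ≤ sin t ^ 2 := by
    rw [← hsin, ← sq_abs (sin _)]
    exact pow_le_pow_left₀ (by positivity) (mul_abs_le_abs_sin ht) 2
  apply inv_anti₀ (by positivity)
  calc 1 + (2 * a / π * (t - k * π)) ^ 2 = 1 + a ^ 2 * (2 / π * |t - k * π|) ^ 2 := by
        simp only [mul_pow, sq_abs]; ring
    _ ≤ 1 + a ^ 2 * sin t ^ 2 := by gcongr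

lemma setLIntegral_Icc_inv_one_add_exp_mul_sin_sq_le (k : ℕ) :
    ∫⁻ t in Icc (k * π - π / 2) (k * π + π / 2), ENNReal.ofReal (1 + exp t * sin t ^ 2)⁻¹ ≤
      ENNReal.ofReal (π ^ 2 / 2 * exp (π / 4)) * ENNReal.ofReal (exp (-(π / 2))) ^ k := by
  set a := exp ((k * π - π / 2) / 2) with ha
  have hpointwise : ∀ t ∈ Icc (k * π - π / 2) (k * π + π / 2),
      (1 + exp t * sin t ^ 2)⁻¹ ≤ (1 + (2 * a / π * (t - k * π)) ^ 2)⁻¹ := fun t ht => by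
    have hexp : a ^ 2 ≤ exp t := by
      rw [ha, ← exp_nat_mul, exp_le_exp]; push_cast; linarith [ht.1]
    refine le_trans (inv_anti₀ (by positivity) (by gcongr)) <|
      inv_one_add_sq_mul_sin_sq_le a k (abs_le.2 ⟨by linarith [ht.1], by linarith [ht.2]⟩)
  calc _ ≤ ∫⁻ t in Icc (k * π - π / 2) (k * π + π / 2),
          ENNReal.ofReal (1 + (2 * a / π * (t - k * π)) ^ 2)⁻¹ :=
        setLIntegral_mono' measurableSet_Icc fun t ht => ofReal_le_ofReal (hpointwise t ht)
    _ ≤ ∫⁻ t, ENNReal.ofReal (1 + (2 * a / π * (t - k * π)) ^ 2)⁻¹ :=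
        setLIntegral_le_lintegral _ _
    _ = ENNReal.ofReal (π / (2 * a / π)) := lintegral_inv_one_add_sq_mul_sub (by positivity) _
    _ = _ := by
      rw [← ofReal_pow (exp_pos _).le, ← ofReal_mul (by positivity), ← exp_nat_mul, mul_assoc,
        ← exp_add, show π / 4 + k * -(π / 2) = -((k * π - π / 2) / 2) by ring, exp_neg, ← ha]
      congr 1
      field_simp

lemma Ici_zero_subset_iUnion_Icc :
    Ici (0 : ℝ) ⊆ ⋃ k : ℕ, Icc (k * π - π / 2) (k * π + π / 2) := by
  intro t ht
  have hnonneg : 0 ≤ (t + π / 2) / π := by have : (0 : ℝ) ≤ t := ht; positivity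
  refine mem_iUnion.2 ⟨⌊(t + π / 2) / π⌋₊, ?_, ?_⟩
  · linarith [(le_div_iff₀ pi_pos).1 (Nat.floor_le hnonneg)]
  · linarith [(div_lt_iff₀ pi_pos).1 (Nat.lt_floor_add_one ((t + π / 2) / π))]

lemma setLIntegral_Ici_inv_one_add_exp_mul_sin_sq_lt_top :
    ∫⁻ t in Ici 0, ENNReal.ofReal (1 + exp t * sin t ^ 2)⁻¹ < ⊤ := by
  have hr : ENNReal.ofReal (exp (-(π / 2))) < 1 :=
    ofReal_lt_one.2 (Real.exp_lt_one_iff.2 (by linarith [pi_pos]))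
  set C := ENNReal.ofReal (π ^ 2 / 2 * exp (π / 4))
  set r := ENNReal.ofReal (exp (-(π / 2)))
  calc _ ≤ ∫⁻ t in ⋃ k : ℕ, Icc (k * π - π / 2) (k * π + π / 2),
          ENNReal.ofReal (1 + exp t * sin t ^ 2)⁻¹ :=
        lintegral_mono_set Ici_zero_subset_iUnion_Icc
    _ ≤ ∑' k : ℕ, ∫⁻ t in Icc (k * π - π / 2) (k * π + π / 2),
          ENNReal.ofReal (1 + exp t * sin t ^ 2)⁻¹ := lintegral_iUnion_le _ _
    _ ≤ ∑' k : ℕ, C * r ^ k :=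
        ENNReal.tsum_le_tsum setLIntegral_Icc_inv_one_add_exp_mul_sin_sq_le
    _ = C * (1 - r)⁻¹ := by rw [ENNReal.tsum_mul_left, ENNReal.tsum_geometric]
    _ < ⊤ := ENNReal.mul_lt_top ofReal_lt_top (ENNReal.inv_lt_top.2 (tsub_pos_of_lt hr))

noncomputable def truncLog (x : ℝ) : ℝ := log (max (exp 1) x)

noncomputable def phi2 (x : ℝ) : ℝ :=
  2 * truncLog x * (1 + truncLog (truncLog x) * sin (truncLog (truncLog (truncLog x))) ^ 2)

noncomputable def tripleExp (t : ℝ) : ℝ := exp (exp (exp t))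

@[fun_prop]
lemma measurable_truncLog : Measurable truncLog := by
  unfold truncLog; fun_prop

@[fun_prop]
lemma measurable_phi2 : Measurable phi2 := by
  unfold phi2; fun_prop

lemma one_le_truncLog (x : ℝ) : 1 ≤ truncLog x := by
  rw [truncLog, le_log_iff_exp_le (lt_of_lt_of_le (exp_pos 1) (le_max_left _ _))]
  exact le_max_left _ _

lemma truncLog_exp {y : ℝ} (hy : 1 ≤ y) : truncLog (exp y) = y := by
  rw [truncLog, max_eq_right (exp_le_exp.2 hy), log_exp]

lemma two_le_phi2 (x : ℝ) : 2 ≤ phi2 x := by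
  have h1 := one_le_truncLog x
  have h2 : 0 ≤ truncLog (truncLog x) * sin (truncLog (truncLog (truncLog x))) ^ 2 :=
    mul_nonneg (zero_le_one.trans (one_le_truncLog _)) (sq_nonneg _)
  rw [phi2]; nlinarith

lemma truncLog_tripleExp (t : ℝ) : truncLog (tripleExp t) = exp (exp t) :=
  truncLog_exp (one_le_exp (exp_nonneg t))

lemma truncLog_truncLog_tripleExp {t : ℝ} (ht : 0 ≤ t) :
    truncLog (truncLog (tripleExp t)) = exp t := by
  rw [truncLog_tripleExp, truncLog_exp (one_le_exp ht)]

lemma phi2_tripleExp {t : ℝ} (ht : 1 ≤ t) :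
    phi2 (tripleExp t) = 2 * exp (exp t) * (1 + exp t * sin t ^ 2) := by
  rw [phi2, truncLog_truncLog_tripleExp (zero_le_one.trans ht), truncLog_exp ht,
    truncLog_tripleExp]

lemma strictMono_tripleExp : StrictMono tripleExp :=
  exp_strictMono.comp (exp_strictMono.comp exp_strictMono)

lemma hasDerivAt_tripleExp (t : ℝ) :
    HasDerivAt tripleExp (tripleExp t * exp (exp t) * exp t) t := by
  have := ((hasDerivAt_exp t).exp).exp
  rw [← mul_assoc] at this
  exact this

lemma image_tripleExp_Ici (a : ℝ) : tripleExp '' Ici a = Ici (tripleExp a) := by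
  refine Subset.antisymm (image_subset_iff.2 fun t ht => strictMono_tripleExp.monotone ht)
    fun x (hx : tripleExp a ≤ x) => ?_
  have hx0 : 0 < x := (exp_pos _).trans_le hx
  have h1 : exp (exp a) ≤ log x := (le_log_iff_exp_le hx0).2 hx
  have h2 : exp a ≤ log (log x) := (le_log_iff_exp_le ((exp_pos _).trans_le h1)).2 h1
  have h3 : a ≤ log (log (log x)) := (le_log_iff_exp_le ((exp_pos _).trans_le h2)).2 h2
  refine ⟨log (log (log x)), h3, ?_⟩
  rw [tripleExp, exp_log ((exp_pos _).trans_le h2), exp_log ((exp_pos _).trans_le h1),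
    exp_log hx0]

lemma setLIntegral_Ici_tripleExp_eq :
    ∫⁻ x in Ici (tripleExp 1), ENNReal.ofReal (x * phi2 x * truncLog (truncLog x))⁻¹ =
      ∫⁻ t in Ici 1, ENNReal.ofReal (2 * (1 + exp t * sin t ^ 2))⁻¹ := by
  rw [← image_tripleExp_Ici, lintegral_image_eq_lintegral_abs_deriv_mul measurableSet_Ici
    (fun t _ => (hasDerivAt_tripleExp t).hasDerivWithinAt) strictMono_tripleExp.injective.injOn]
  refine setLIntegral_congr_fun measurableSet_Ici fun t (ht : 1 ≤ t) => ?_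
  have htripleExp : 0 < tripleExp t := exp_pos _
  rw [← ofReal_mul (abs_nonneg _), abs_of_pos (by positivity), phi2_tripleExp ht,
    truncLog_truncLog_tripleExp (zero_le_one.trans ht)]
  congr 1
  field_simp

lemma setLIntegral_Ici_one_inv_mul_phi2_lt_top :
    ∫⁻ x in Ici 1, ENNReal.ofReal (x * phi2 x * truncLog (truncLog x))⁻¹ < ⊤ := by
  have hcover : Ici (1 : ℝ) ⊆ Icc 1 (tripleExp 1) ∪ Ici (tripleExp 1) := fun x hx =>
    (le_total x (tripleExp 1)).imp (fun h => ⟨hx, h⟩) id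
  refine (lintegral_mono_set hcover).trans_lt <|
    (lintegral_union_le _ _ _).trans_lt (ENNReal.add_lt_top.2 ⟨?_, ?_⟩)
  · refine setLIntegral_lt_top_of_le_nnreal (by simp) ⟨1, fun x hx => ?_⟩
    have hone : 1 ≤ x * phi2 x * truncLog (truncLog x) :=
      one_le_mul_of_one_le_of_one_le
        (one_le_mul_of_one_le_of_one_le hx.1 (by linarith [two_le_phi2 x])) (one_le_truncLog _)
    simpa using inv_le_one_of_one_le₀ hone
  · rw [setLIntegral_Ici_tripleExp_eq]
    refine lt_of_le_of_lt ?_ setLIntegral_Ici_inv_one_add_exp_mul_sin_sq_lt_top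
    refine lintegral_mono' (Measure.restrict_mono (Ici_subset_Ici.2 zero_le_one) le_rfl)
      fun t => ofReal_le_ofReal <|
        inv_anti₀ (by positivity) (by nlinarith [exp_pos t, sq_nonneg (sin t)])

lemma lintegral_comp_abs_le {f : ℝ → ℝ≥0∞} (hf : Measurable f) :
    ∫⁻ x, f |x| ≤ 2 * ∫⁻ x, f x := by
  calc ∫⁻ x, f |x| ≤ ∫⁻ x, (f x + f (-x)) := lintegral_mono fun x => by
        rcases abs_choice x with h | h <;> rw [h]
        exacts [le_self_add, le_add_self]
    _ = 2 * ∫⁻ x, f x := by rw [lintegral_add_left hf, lintegral_neg_eq_self, two_mul]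

lemma ofReal_density_mul_eq_indicator (h : ℝ → ℝ) (x : ℝ) :
    ENNReal.ofReal (if 1 ≤ |x| then |x| ^ (-3 : ℝ) else 0) * ENNReal.ofReal (x ^ 2 / h |x|) =
      (Ici 1).indicator (fun y => ENNReal.ofReal (y * h y)⁻¹) |x| := by
  by_cases hx : 1 ≤ |x|
  · have hx0 : |x| ≠ 0 := (zero_lt_one.trans_le hx).ne'
    rw [if_pos hx, indicator_of_mem (mem_Ici.2 hx), ← ofReal_mul (by positivity), ← sq_abs x,
      rpow_neg (abs_nonneg x), show (3 : ℝ) = (3 : ℕ) by norm_num, Real.rpow_natCast]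
    congr 1
    field_simp
  · rw [if_neg hx, indicator_of_notMem (show |x| ∉ Ici 1 from hx), ofReal_zero, zero_mul]

theorem stmt_15 {Ω : Type*} [MeasureSpace Ω]
    (X : Ω → ℝ) (hX : Measurable X)
    (hdens : Measure.map X ℙ =
      volume.withDensity (fun x => ENNReal.ofReal (if 1 ≤ |x| then |x| ^ (-3 : ℝ) else 0)))
    (L : ℝ → ℝ) (hL : ∀ x, L x = Real.log (max (Real.exp 1) x))
    (LL LLL : ℝ → ℝ) (hLL : ∀ x, LL x = L (L x)) (hLLL : ∀ x, LLL x = L (LL x))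
    (φ₂ : ℝ → ℝ)
    (hφ₂ : ∀ x, φ₂ x = 2 * L x * (1 + LL x * Real.sin (LLL x) ^ 2)) :
    (∫⁻ ω, ENNReal.ofReal ((X ω) ^ 2 / (φ₂ |X ω| * LL |X ω|))) < ⊤ := by
  obtain rfl : L = truncLog := funext hL
  obtain rfl : LL = fun x => truncLog (truncLog x) := funext hLL
  obtain rfl : LLL = fun x => truncLog (truncLog (truncLog x)) := funext hLLL
  obtain rfl : φ₂ = phi2 := funext hφ₂
  set w := (Ici (1 : ℝ)).indicator fun y =>
    ENNReal.ofReal (y * (phi2 y * truncLog (truncLog y)))⁻¹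
  have hw : Measurable w := Measurable.indicator (by fun_prop) measurableSet_Ici
  have hdensity : Measurable fun x : ℝ =>
      ENNReal.ofReal (if 1 ≤ |x| then |x| ^ (-3 : ℝ) else 0) :=
    (Measurable.ite (measurableSet_le measurable_const measurable_abs) (by fun_prop)
      measurable_const).ennreal_ofReal
  have hintegrand : Measurable fun x : ℝ =>
      ENNReal.ofReal (x ^ 2 / (phi2 |x| * truncLog (truncLog |x|))) := by fun_prop
  calc ∫⁻ ω, ENNReal.ofReal (X ω ^ 2 / (phi2 |X ω| * truncLog (truncLog |X ω|)))
      = ∫⁻ x, ENNReal.ofReal (x ^ 2 / (phi2 |x| * truncLog (truncLog |x|))) ∂Measure.map X ℙ :=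
        (lintegral_map hintegrand hX).symm
    _ = ∫⁻ x, w |x| := by
        rw [hdens, lintegral_withDensity_eq_lintegral_mul _ hdensity hintegrand]
        exact lintegral_congr fun x =>
          ofReal_density_mul_eq_indicator (fun y => phi2 y * truncLog (truncLog y)) x
    _ ≤ 2 * ∫⁻ x, w x := lintegral_comp_abs_le hw
    _ < ⊤ := by
        rw [lintegral_indicator measurableSet_Ici]
        simp only [← mul_assoc]
        exact ENNReal.mul_lt_top (by simp) setLIntegral_Ici_one_inv_mul_phi2_lt_top
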